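/- arXiv:1304.2496 — 3 statements merged into one kernel-verified Lean document; each statement's English description precedes it below -/
import Mathlib

section
/- Let H be a self-adjoint operator in a Hilbert space F with domain D(H), let T ⊂ F be a finite-dimensional subspace with orthogonal projection Π, and suppose the operator S defined on D(S) := D(H) ∩ T^⊥ by S u := (1−Π) H u satisfies (S u, u) ≥ C ‖u‖² for all u ∈ D(S), where C > 0. Then S, viewed as an unbounded operator in the Hilbert space T^⊥, is self-adjoint on D(S), bijective onto T^⊥, and its inverse satisfies ‖S^{-1}‖ ≤ C^{-1}. -/
/-!
Because `Π H u ∈ T` is orthogonal to `Tᗮ`, the compression `S = (1 - Π) H` is symmetric on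
`D ∩ Tᗮ`. It is even self-adjoint in `Tᗮ`: since `T ⊆ D` is finite-dimensional, the functional
`t ↦ ⟪H t, v⟫` on `T` is represented by a vector of `T`, so splitting `u = Π u + (1 - Π) u` turns
the adjoint identity for `S` at `v` into one for `H`, and `v ∈ D` by self-adjointness of `H`.
Coercivity gives `‖u‖ ≤ C⁻¹ ‖S u‖`, hence injectivity and the bound on the inverse. The range of a
coercive self-adjoint operator is closed (the limit of a Cauchy sequence `u n` with `S u n → w`
satisfies the adjoint identity, so it lies in the domain and is mapped to `w`) and dense (a vector
orthogonal to the range lies in the domain, and coercivity forces it to vanish), so `S` is onto.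
-/

open Submodule Filter
open scoped InnerProductSpace

theorem AntilipschitzWith.cauchySeq_of_cauchySeq_comp {α β : Type*} [PseudoEMetricSpace α]
    [PseudoEMetricSpace β] {K : NNReal} {f : α → β} (hf : AntilipschitzWith K f) {u : ℕ → α}
    (hu : CauchySeq (f ∘ u)) : CauchySeq u := by
  rw [CauchySeq, ← Filter.map_map] at hu
  have : NeBot (comap f (map f (map u atTop))) := neBot_of_le le_comap_map
  exact (hu.comap hf.comap_uniformity_le).mono le_comap_map

section SelfAdjointOperator

variable {𝕜 E : Type*} [RCLike 𝕜] [NormedAddCommGroup E] [InnerProductSpace 𝕜 E]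

theorem norm_le_inv_mul_norm_of_le_re_inner {C : ℝ} (hC : 0 < C) {x y : E}
    (h : C * ‖x‖ ^ 2 ≤ RCLike.re ⟪y, x⟫_𝕜) : ‖x‖ ≤ C⁻¹ * ‖y‖ := by
  rw [le_inv_mul_iff₀ hC]
  rcases (norm_nonneg x).eq_or_lt with hx | hx
  · rw [← hx, mul_zero]
    exact norm_nonneg y
  · refine le_of_mul_le_mul_right ?_ hx
    calc C * ‖x‖ * ‖x‖ = C * ‖x‖ ^ 2 := by ring
      _ ≤ RCLike.re ⟪y, x⟫_𝕜 := h
      _ ≤ ‖y‖ * ‖x‖ := (RCLike.re_le_norm _).trans (norm_inner_le_norm y x)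

theorem LinearMap.antilipschitzWith_of_coercive {V : Submodule 𝕜 E} (S : V →ₗ[𝕜] E) {C : ℝ}
    (hC : 0 < C) (hcoer : ∀ u : V, C * ‖(u : E)‖ ^ 2 ≤ RCLike.re ⟪S u, u⟫_𝕜) :
    AntilipschitzWith (Real.toNNReal C⁻¹) S :=
  AddMonoidHomClass.antilipschitz_of_bound S fun u => by
    rw [Real.coe_toNNReal _ (inv_nonneg.mpr hC.le)]
    exact norm_le_inv_mul_norm_of_le_re_inner hC (hcoer u)

/-- Self-adjointness of the densely defined operator `S`: it is symmetric and `dom S* ⊆ V`. -/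
structure IsSelfAdjointOperator {V : Submodule 𝕜 E} (S : V →ₗ[𝕜] E) : Prop where
  dense : Dense (V : Set E)
  inner_map_comm : ∀ u v : V, ⟪S u, v⟫_𝕜 = ⟪(u : E), S v⟫_𝕜
  mem_of_inner_map_eq : ∀ v f : E, (∀ u : V, ⟪S u, v⟫_𝕜 = ⟪(u : E), f⟫_𝕜) → v ∈ V

namespace IsSelfAdjointOperator

variable {V : Submodule 𝕜 E} {S : V →ₗ[𝕜] E}

theorem exists_apply_eq_of_inner_map_eq (hS : IsSelfAdjointOperator S) {v w : E}
    (h : ∀ u : V, ⟪S u, v⟫_𝕜 = ⟪(u : E), w⟫_𝕜) : ∃ hv : v ∈ V, S ⟨v, hv⟩ = w := by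
  have hv := hS.mem_of_inner_map_eq v w h
  exact ⟨hv, hS.dense.eq_of_inner_right 𝕜 fun x hx =>
    (hS.inner_map_comm ⟨x, hx⟩ ⟨v, hv⟩).symm.trans (h ⟨x, hx⟩)⟩

theorem orthogonal_range_eq_bot_of_coercive (hS : IsSelfAdjointOperator S) {C : ℝ} (hC : 0 < C)
    (hcoer : ∀ u : V, C * ‖(u : E)‖ ^ 2 ≤ RCLike.re ⟪S u, u⟫_𝕜) :
    (LinearMap.range S)ᗮ = ⊥ := by
  refine (Submodule.eq_bot_iff _).mpr fun p hp => ?_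
  have hperp : ∀ u : V, ⟪S u, p⟫_𝕜 = ⟪(u : E), 0⟫_𝕜 := fun u => by
    rw [inner_zero_right]
    exact (mem_orthogonal _ _).mp hp _ ⟨u, rfl⟩
  have hpV := hS.mem_of_inner_map_eq p 0 hperp
  have h : C * ‖p‖ ^ 2 ≤ RCLike.re ⟪(0 : E), p⟫_𝕜 := by
    simpa only [hperp, inner_zero_left, inner_zero_right] using hcoer ⟨p, hpV⟩
  simpa using norm_le_inv_mul_norm_of_le_re_inner hC h

theorem isClosed_range_of_coercive [CompleteSpace E] (hS : IsSelfAdjointOperator S) {C : ℝ}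
    (hC : 0 < C) (hcoer : ∀ u : V, C * ‖(u : E)‖ ^ 2 ≤ RCLike.re ⟪S u, u⟫_𝕜) :
    IsClosed (LinearMap.range S : Set E) := by
  refine isClosed_of_closure_subset fun w hw => ?_
  obtain ⟨x, hx, hxw⟩ := mem_closure_iff_seq_limit.mp hw
  choose u hu using hx
  have hcauchy : CauchySeq u :=
    (S.antilipschitzWith_of_coercive hC hcoer).cauchySeq_of_cauchySeq_comp <| by
      simpa only [Function.comp_def, hu] using hxw.cauchySeq
  obtain ⟨v, hv⟩ :=
    cauchySeq_tendsto_of_complete (uniformContinuous_subtype_val.comp_cauchySeq hcauchy)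
  have hinner : ∀ z : V, ⟪S z, v⟫_𝕜 = ⟪(z : E), w⟫_𝕜 := fun z =>
    tendsto_nhds_unique
      ((tendsto_const_nhds.inner hv).congr fun n => by
        simp only [Function.comp_apply, hS.inner_map_comm, hu])
      (tendsto_const_nhds.inner hxw)
  obtain ⟨hvV, hSv⟩ := hS.exists_apply_eq_of_inner_map_eq hinner
  exact ⟨⟨v, hvV⟩, hSv⟩

theorem surjective_of_coercive [CompleteSpace E] (hS : IsSelfAdjointOperator S) {C : ℝ}
    (hC : 0 < C) (hcoer : ∀ u : V, C * ‖(u : E)‖ ^ 2 ≤ RCLike.re ⟪S u, u⟫_𝕜) :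
    Function.Surjective S := by
  have htop : (LinearMap.range S).topologicalClosure = ⊤ :=
    topologicalClosure_eq_top_iff.mpr (hS.orthogonal_range_eq_bot_of_coercive hC hcoer)
  rw [(hS.isClosed_range_of_coercive hC hcoer).submodule_topologicalClosure_eq] at htop
  exact LinearMap.range_eq_top.mp htop

end IsSelfAdjointOperator

end SelfAdjointOperator

section Compression

variable {𝕜 F : Type*} [RCLike 𝕜] [NormedAddCommGroup F] [InnerProductSpace 𝕜 F]

theorem Submodule.dense_comap_subtype_orthogonal {D T : Submodule 𝕜 F}
    [T.HasOrthogonalProjection] (hD : Dense (D : Set F)) (hTD : T ≤ D) :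
    Dense (D.comap Tᗮ.subtype : Set Tᗮ) := by
  have himage : Tᗮ.orthogonalProjectionOnto '' D ⊆ D.comap Tᗮ.subtype := by
    rintro _ ⟨d, hd, rfl⟩
    rw [SetLike.mem_coe, mem_comap, subtype_apply, orthogonalProjectionOnto_orthogonal]
    exact D.sub_mem hd (hTD (coe_mem _))
  have hsurj : Function.Surjective Tᗮ.orthogonalProjectionOnto := fun x =>
    ⟨x, orthogonalProjectionOnto_mem_subspace_eq_self x⟩
  exact (hsurj.denseRange.dense_image (ContinuousLinearMap.continuous _) hD).mono himage

variable {D : Submodule 𝕜 F} (H : D →ₗ[𝕜] F) (T : Submodule 𝕜 F) [T.HasOrthogonalProjection]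

/-- The compression `(1 - Π) H` of `H` to `Tᗮ`, with domain `D ∩ Tᗮ`. -/
noncomputable def LinearMap.compression : D.comap Tᗮ.subtype →ₗ[𝕜] Tᗮ :=
  Tᗮ.orthogonalProjectionOnto.toLinearMap ∘ₗ H ∘ₗ Tᗮ.subtype.submoduleComap D

variable {T}

theorem LinearMap.compression_apply (u : D.comap Tᗮ.subtype) :
    H.compression T u = Tᗮ.orthogonalProjectionOnto (H ⟨u, u.2⟩) :=
  rfl

theorem LinearMap.coe_compression_apply (u : D.comap Tᗮ.subtype) :
    (H.compression T u : F) = H ⟨u, u.2⟩ - (T.orthogonalProjectionOnto (H ⟨u, u.2⟩) : F) := by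
  rw [compression_apply, orthogonalProjectionOnto_orthogonal]
  rfl

theorem LinearMap.inner_compression_left (u : D.comap Tᗮ.subtype) (v : Tᗮ) :
    ⟪H.compression T u, v⟫_𝕜 = ⟪H ⟨u, u.2⟩, (v : F)⟫_𝕜 := by
  rw [compression_apply, inner_orthogonalProjectionOnto_eq_of_mem_right]

theorem LinearMap.inner_compression_right (u : D.comap Tᗮ.subtype) (v : Tᗮ) :
    ⟪v, H.compression T u⟫_𝕜 = ⟪(v : F), H ⟨u, u.2⟩⟫_𝕜 := by
  rw [compression_apply, inner_orthogonalProjectionOnto_eq_of_mem_left]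

variable {H}

theorem IsSelfAdjointOperator.compression [CompleteSpace F] [FiniteDimensional 𝕜 T]
    (hH : IsSelfAdjointOperator H) (hTD : T ≤ D) :
    IsSelfAdjointOperator (H.compression T) where
  dense := dense_comap_subtype_orthogonal hH.dense hTD
  inner_map_comm u v := by
    rw [H.inner_compression_left, H.inner_compression_right]
    exact hH.inner_map_comm ⟨u, u.2⟩ ⟨v, v.2⟩
  mem_of_inner_map_eq v f h := by
    let A : T →L[𝕜] F := (H ∘ₗ inclusion hTD).toContinuousLinearMap
    refine hH.mem_of_inner_map_eq (v : F) (A.adjoint v + f) fun u => ?_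
    set t := T.orthogonalProjectionOnto (u : F)
    have hu₁ : ((Tᗮ.orthogonalProjectionOnto (u : F) : Tᗮ) : F) ∈ D := by
      rw [orthogonalProjectionOnto_orthogonal]
      exact D.sub_mem u.2 (hTD t.2)
    let u₁ : D.comap Tᗮ.subtype := ⟨Tᗮ.orthogonalProjectionOnto (u : F), hu₁⟩
    have hsplit : u = inclusion hTD t + ⟨u₁, hu₁⟩ := by
      ext
      simp [u₁, t]
    calc ⟪H u, v⟫_𝕜 = ⟪A t, v⟫_𝕜 + ⟪H.compression T u₁, v⟫_𝕜 := by
          rw [H.inner_compression_left, hsplit, map_add, inner_add_left]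
          rfl
      _ = ⟪t, A.adjoint v⟫_𝕜 + ⟪(u₁ : Tᗮ), f⟫_𝕜 := by
          rw [ContinuousLinearMap.adjoint_inner_right, h]
      _ = ⟪(u : F), A.adjoint v + f⟫_𝕜 := by
          rw [inner_add_right, inner_orthogonalProjectionOnto_eq_of_mem_right,
            inner_orthogonalProjectionOnto_eq_of_mem_right]

end Compression

/-- **Self-adjointness and invertibility of the coercive compression (Lemma 3.4).** Let `H` be a
self-adjoint operator in a Hilbert space `F` with (dense) domain `D`, let `T` be a
finite-dimensional subspace of `F` contained in `D`, with orthogonal projection `Π`, and let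
`S u := (1 − Π) H u` on `D(S) := D ∩ Tᗮ`. If `(S u, u) ≥ C ‖u‖²` on `D(S)` with `C > 0`, then
`S`, viewed as an unbounded operator in the Hilbert space `Tᗮ`, is symmetric, self-adjoint
(its adjoint domain is contained in `D`), bijective from `D(S)` onto `Tᗮ`, and its inverse is
bounded by `C⁻¹`. -/
theorem stmt_4 {F : Type} [NormedAddCommGroup F] [InnerProductSpace ℂ F] [CompleteSpace F]
    (D : Submodule ℂ F) (hdense : Dense (D : Set F))
    (H : D →ₗ[ℂ] F)
    (hsym : ∀ u v : D, (inner ℂ (H u) (v : F) : ℂ) = inner ℂ (u : F) (H v))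
    (hmax : ∀ v f : F, (∀ u : D, (inner ℂ (H u) v : ℂ) = inner ℂ (u : F) f) → v ∈ D)
    (T : Submodule ℂ F) [FiniteDimensional ℂ T] (hTD : (T : Set F) ⊆ D)
    (C : ℝ) (hC : 0 < C)
    (hcoer : ∀ (u : F) (hu : u ∈ D), u ∈ Tᗮ →
      C * ‖u‖ ^ 2 ≤
        (inner ℂ (H ⟨u, hu⟩ - (orthogonalProjectionOnto T (H ⟨u, hu⟩) : F)) u : ℂ).re) :
    -- `S` is symmetric on `D ∩ Tᗮ`
    (∀ (u v : F) (hu : u ∈ D) (hv : v ∈ D), u ∈ Tᗮ → v ∈ Tᗮ →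
        (inner ℂ (H ⟨u, hu⟩ - (orthogonalProjectionOnto T (H ⟨u, hu⟩) : F)) v : ℂ) =
          inner ℂ u (H ⟨v, hv⟩ - (orthogonalProjectionOnto T (H ⟨v, hv⟩) : F))) ∧
    -- `S` is self-adjoint in `Tᗮ`: any `v ∈ Tᗮ` in the domain of the adjoint lies in `D`
    (∀ v : F, v ∈ Tᗮ →
        (∃ f : F, f ∈ Tᗮ ∧ ∀ (u : F) (hu : u ∈ D), u ∈ Tᗮ →
          (inner ℂ (H ⟨u, hu⟩ - (orthogonalProjectionOnto T (H ⟨u, hu⟩) : F)) v : ℂ) =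
            inner ℂ u f) → v ∈ D) ∧
    -- `S : D ∩ Tᗮ → Tᗮ` is bijective
    (∀ w : F, w ∈ Tᗮ → ∃! u : F, ∃ hu : u ∈ D, u ∈ Tᗮ ∧
        H ⟨u, hu⟩ - (orthogonalProjectionOnto T (H ⟨u, hu⟩) : F) = w) ∧
    -- the inverse is bounded by `C⁻¹`
    ∀ (u : F) (hu : u ∈ D), u ∈ Tᗮ →
      ‖u‖ ≤ C⁻¹ * ‖H ⟨u, hu⟩ - (orthogonalProjectionOnto T (H ⟨u, hu⟩) : F)‖ := by
  have hS : IsSelfAdjointOperator (H.compression T) :=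
    IsSelfAdjointOperator.compression ⟨hdense, hsym, hmax⟩ hTD
  have hcoerS : ∀ u : D.comap Tᗮ.subtype,
      C * ‖(u : Tᗮ)‖ ^ 2 ≤ RCLike.re ⟪H.compression T u, u⟫_ℂ := fun u => by
    rw [coe_inner, H.coe_compression_apply]
    exact hcoer _ u.2 (u : Tᗮ).2
  have hsurj := hS.surjective_of_coercive hC hcoerS
  have hinj := ((H.compression T).antilipschitzWith_of_coercive hC hcoerS).injective
  refine ⟨fun u v hu hv huT hvT => ?_, fun v hv ⟨f, hf, h⟩ => ?_, fun w hw => ?_,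
    fun u hu huT => ?_⟩
  · have := hS.inner_map_comm ⟨⟨u, huT⟩, hu⟩ ⟨⟨v, hvT⟩, hv⟩
    rw [coe_inner, coe_inner, H.coe_compression_apply, H.coe_compression_apply] at this
    exact this
  · refine hS.mem_of_inner_map_eq ⟨v, hv⟩ ⟨f, hf⟩ fun u => ?_
    rw [coe_inner, coe_inner, H.coe_compression_apply]
    exact h _ u.2 (u : Tᗮ).2
  · obtain ⟨u, hu⟩ := hsurj ⟨w, hw⟩
    refine ⟨u, ⟨u.2, (u : Tᗮ).2, ?_⟩, fun y ⟨hyD, hyT, hy⟩ => ?_⟩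
    · exact (H.coe_compression_apply u).symm.trans (congrArg Subtype.val hu)
    · have hSy : H.compression T ⟨⟨y, hyT⟩, hyD⟩ = H.compression T u :=
        Subtype.ext <|
          (H.coe_compression_apply _).trans (hy.trans (congrArg Subtype.val hu).symm)
      exact congrArg (fun z : D.comap Tᗮ.subtype => ((z : Tᗮ) : F)) (hinj hSy)
  · have := norm_le_inv_mul_norm_of_le_re_inner hC (hcoerS ⟨⟨u, huT⟩, hu⟩)
    rw [coe_norm, coe_norm, H.coe_compression_apply] at this
    exact this
end

section
/- Let H be a self-adjoint operator in a Hilbert space F with domain D(H), let ψ_1,…,ψ_N ∈ D(H) be an orthonormal system spanning T, with projection Π onto T, and define R_± as before. Assume ((1−Π)Hu, u) ≥ C‖u‖² for all u ∈ D(H) ∩ T^⊥ with C > 0. Then the block operator Q = [[H, R_−],[R_+, 0]] : D(H) ⊕ ℂ^N → F ⊕ ℂ^N is bijective, and there is a constant C' depending only on C, N, max_j ‖Hψ_j‖ such that the inverse Q^{-1} is bounded by C' from F ⊕ ℂ^N to F ⊕ ℂ^N. -/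
/-!
Put `Π` for the orthogonal projection onto `T = span ψ` and `B = (1 - Π) H (1 - Π) + Π` on `D`.
`B` differs from `H` by finite-rank terms built from `H Π`, which is bounded, so `B` is
self-adjoint as well. Coercivity of `(1 - Π) H` on `D ∩ Tᗮ` gives `‖u‖ ≤ (C⁻¹ + 1) ‖B u‖`. A
self-adjoint operator bounded below is surjective: its range is closed because the operator is
closed, and the orthogonal complement of the range is its kernel. Solving
`B u = (1 - Π) (v - H τ) + τ` with `τ = ∑ j, e j • ψ j` solves the Grushin problem. The same
coercivity, applied to `u - Π u`, bounds every solution, and the bound gives uniqueness by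
linearity.
-/

open scoped InnerProductSpace
open Filter Topology Submodule

variable {𝕜 F : Type*} [RCLike 𝕜] [NormedAddCommGroup F] [InnerProductSpace 𝕜 F]

/-- `H` is symmetric and `D(H*) ⊆ D`; for dense `D` this is self-adjointness. -/
structure IsSelfAdjointOn {D : Submodule 𝕜 F} (H : D →ₗ[𝕜] F) : Prop where
  symm : ∀ u v : D, ⟪H u, (v : F)⟫_𝕜 = ⟪(u : F), H v⟫_𝕜
  mem_of_forall_inner : ∀ v f : F, (∀ u : D, ⟪H u, v⟫_𝕜 = ⟪(u : F), f⟫_𝕜) → v ∈ D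

namespace IsSelfAdjointOn

variable {D : Submodule 𝕜 F} {H : D →ₗ[𝕜] F}

theorem exists_map_eq (hH : IsSelfAdjointOn H) (hD : Dense (D : Set F)) {v f : F}
    (h : ∀ u : D, ⟪H u, v⟫_𝕜 = ⟪(u : F), f⟫_𝕜) : ∃ hv : v ∈ D, H ⟨v, hv⟩ = f := by
  have hv := hH.mem_of_forall_inner v f h
  refine ⟨hv, hD.eq_of_inner_right 𝕜 fun w hw => ?_⟩
  rw [← h ⟨w, hw⟩]
  exact (hH.symm ⟨w, hw⟩ ⟨v, hv⟩).symm

theorem exists_map_eq_of_tendsto (hH : IsSelfAdjointOn H) (hD : Dense (D : Set F))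
    {u : ℕ → D} {l f : F} (hu : Tendsto (fun n => (u n : F)) atTop (𝓝 l))
    (hHu : Tendsto (fun n => H (u n)) atTop (𝓝 f)) : ∃ hl : l ∈ D, H ⟨l, hl⟩ = f := by
  refine hH.exists_map_eq hD fun w => tendsto_nhds_unique (tendsto_const_nhds.inner hu) ?_
  simp_rw [hH.symm]
  exact tendsto_const_nhds.inner hHu

theorem isClosed_range [CompleteSpace F] (hH : IsSelfAdjointOn H) (hD : Dense (D : Set F))
    {K : ℝ} (hK : ∀ u : D, ‖(u : F)‖ ≤ K * ‖H u‖) : IsClosed (LinearMap.range H : Set F) := by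
  refine IsSeqClosed.isClosed fun f g hf hfg => ?_
  choose u hu using fun n => LinearMap.mem_range.mp (hf n)
  have hcauchy : CauchySeq fun n => (u n : F) := by
    have hf' := cauchySeq_iff_tendsto_dist_atTop_0.mp hfg.cauchySeq
    rw [cauchySeq_iff_tendsto_dist_atTop_0]
    refine squeeze_zero (fun _ => dist_nonneg) (fun p => ?_) (by simpa using hf'.const_mul K)
    simpa [dist_eq_norm, ← hu] using hK (u p.1 - u p.2)
  obtain ⟨l, hl⟩ := cauchySeq_tendsto_of_complete hcauchy
  obtain ⟨hlD, hHl⟩ := hH.exists_map_eq_of_tendsto hD hl (by simpa only [hu] using hfg)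
  exact ⟨⟨l, hlD⟩, hHl⟩

theorem surjective [CompleteSpace F] (hH : IsSelfAdjointOn H) (hD : Dense (D : Set F))
    {K : ℝ} (hK : ∀ u : D, ‖(u : F)‖ ≤ K * ‖H u‖) : Function.Surjective H := by
  have : CompleteSpace (LinearMap.range H) := (hH.isClosed_range hD hK).completeSpace_coe
  suffices (LinearMap.range H)ᗮ = ⊥ from
    LinearMap.range_eq_top.mp (orthogonal_eq_bot_iff.mp this)
  refine (Submodule.eq_bot_iff _).mpr fun w hw => ?_
  obtain ⟨hwD, hHw⟩ := hH.exists_map_eq hD (v := w) (f := 0) fun u => by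
    rw [inner_zero_right]
    exact inner_right_of_mem_orthogonal (LinearMap.mem_range_self H u) hw
  simpa [hHw] using hK ⟨w, hwD⟩

end IsSelfAdjointOn

def IsCoerciveCompression {D : Submodule 𝕜 F} (H : D →ₗ[𝕜] F) (T : Submodule 𝕜 F)
    [T.HasOrthogonalProjection] (C : ℝ) : Prop :=
  ∀ u : D, (u : F) ∈ Tᗮ → C * ‖(u : F)‖ ^ 2 ≤ RCLike.re ⟪Tᗮ.starProjection (H u), (u : F)⟫_𝕜

theorem IsCoerciveCompression.mul_norm_le {D : Submodule 𝕜 F} {H : D →ₗ[𝕜] F}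
    {T : Submodule 𝕜 F} [T.HasOrthogonalProjection] {C : ℝ} (hcoer : IsCoerciveCompression H T C)
    (u : D) (hu : (u : F) ∈ Tᗮ) : C * ‖(u : F)‖ ≤ ‖Tᗮ.starProjection (H u)‖ := by
  rcases (norm_nonneg (u : F)).eq_or_lt with h0 | hpos
  · rw [← h0, mul_zero]
    exact norm_nonneg _
  refine le_of_mul_le_mul_right ?_ hpos
  calc C * ‖(u : F)‖ * ‖(u : F)‖ = C * ‖(u : F)‖ ^ 2 := by ring
    _ ≤ RCLike.re ⟪Tᗮ.starProjection (H u), (u : F)⟫_𝕜 := hcoer u hu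
    _ ≤ ‖Tᗮ.starProjection (H u)‖ * ‖(u : F)‖ := re_inner_le_norm _ _

noncomputable section CompressionAddProj

variable {D : Submodule 𝕜 F} (T : Submodule 𝕜 F) [T.HasOrthogonalProjection] (hTD : T ≤ D)

def domainProj : F →ₗ[𝕜] D :=
  inclusion hTD ∘ₗ (T.orthogonalProjectionOnto : F →ₗ[𝕜] T)

lemma coe_domainProj (x : F) : (domainProj T hTD x : F) = T.starProjection x := rfl

lemma coe_sub_domainProj (u : D) : ((u - domainProj T hTD u : D) : F) = Tᗮ.starProjection u := by
  rw [starProjection_orthogonal_val, Submodule.coe_sub, coe_domainProj]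

def compressionAddProj (H : D →ₗ[𝕜] F) : D →ₗ[𝕜] F :=
  (Tᗮ.starProjection : F →ₗ[𝕜] F) ∘ₗ H ∘ₗ (LinearMap.id - domainProj T hTD ∘ₗ D.subtype) +
    (T.starProjection : F →ₗ[𝕜] F) ∘ₗ D.subtype

lemma compressionAddProj_apply (H : D →ₗ[𝕜] F) (u : D) :
    compressionAddProj T hTD H u =
      Tᗮ.starProjection (H (u - domainProj T hTD u)) + T.starProjection u := rfl

variable {T hTD} {H : D →ₗ[𝕜] F}

lemma starProjection_compressionAddProj (u : D) :
    T.starProjection (compressionAddProj T hTD H u) = T.starProjection u := by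
  rw [compressionAddProj_apply, map_add, (starProjection_apply_eq_zero_iff T).mpr
    (starProjection_apply_mem _ _), zero_add,
    starProjection_eq_self_iff.mpr (starProjection_apply_mem _ _)]

lemma orthogonal_starProjection_compressionAddProj (u : D) :
    Tᗮ.starProjection (compressionAddProj T hTD H u) =
      Tᗮ.starProjection (H (u - domainProj T hTD u)) := by
  rw [compressionAddProj_apply, map_add,
    starProjection_orthogonal_apply_eq_zero (starProjection_apply_mem _ _), add_zero,
    starProjection_eq_self_iff.mpr (starProjection_apply_mem _ _)]

lemma exists_inner_map_domainProj [CompleteSpace F] {L : ℝ}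
    (hL : ∀ t : D, (t : F) ∈ T → ‖H t‖ ≤ L * ‖(t : F)‖) (w : F) :
    ∃ z : F, ∀ x : F, ⟪H (domainProj T hTD x), w⟫_𝕜 = ⟪x, z⟫_𝕜 := by
  let G : F →L[𝕜] F :=
    ((H ∘ₗ inclusion hTD).mkContinuous L fun t => hL _ t.2).comp T.orthogonalProjectionOnto
  exact ⟨G.adjoint w, fun x => (G.adjoint_inner_right x w).symm⟩

theorem IsSelfAdjointOn.compressionAddProj [CompleteSpace F] (hH : IsSelfAdjointOn H) {L : ℝ}
    (hL : ∀ t : D, (t : F) ∈ T → ‖H t‖ ≤ L * ‖(t : F)‖) :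
    IsSelfAdjointOn (compressionAddProj T hTD H) where
  symm u v := by
    simp only [compressionAddProj_apply, inner_add_left, inner_add_right,
      inner_starProjection_left_eq_right]
    rw [← coe_sub_domainProj T hTD v, hH.symm, coe_sub_domainProj,
      inner_starProjection_left_eq_right]
  mem_of_forall_inner v f h := by
    obtain ⟨z, hz⟩ := exists_inner_map_domainProj (hTD := hTD) hL (Tᗮ.starProjection v)
    have hQv : Tᗮ.starProjection v ∈ D :=
      hH.mem_of_forall_inner _ (f - T.starProjection v + z) fun u => by
        have hB := h u
        rw [compressionAddProj_apply, inner_add_left, inner_starProjection_left_eq_right,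
          inner_starProjection_left_eq_right] at hB
        rw [← sub_add_cancel (H u) (H (domainProj T hTD u)), ← map_sub, inner_add_left, hz,
          inner_add_right, inner_sub_right, ← hB]
        ring
    rw [starProjection_orthogonal_val] at hQv
    simpa using D.add_mem hQv (hTD (T.starProjection_apply_mem v))

lemma IsCoerciveCompression.norm_le_compressionAddProj {C : ℝ} (hC : 0 < C)
    (hcoer : IsCoerciveCompression H T C) (u : D) :
    ‖(u : F)‖ ≤ (C⁻¹ + 1) * ‖compressionAddProj T hTD H u‖ := by
  set g := compressionAddProj T hTD H u
  have hQu : C * ‖Tᗮ.starProjection u‖ ≤ ‖g‖ := by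
    rw [← coe_sub_domainProj T hTD]
    calc _ ≤ ‖Tᗮ.starProjection (H (u - domainProj T hTD u))‖ :=
          hcoer.mul_norm_le _ (by rw [coe_sub_domainProj]; exact starProjection_apply_mem _ _)
      _ = ‖Tᗮ.starProjection g‖ := by rw [orthogonal_starProjection_compressionAddProj]
      _ ≤ ‖g‖ := norm_starProjection_apply_le _ _
  have hPu : ‖T.starProjection u‖ ≤ ‖g‖ :=
    starProjection_compressionAddProj (hTD := hTD) (H := H) u ▸ norm_starProjection_apply_le _ _
  calc ‖(u : F)‖ = ‖Tᗮ.starProjection u + T.starProjection u‖ := by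
        rw [starProjection_orthogonal_val, sub_add_cancel]
    _ ≤ ‖Tᗮ.starProjection u‖ + ‖T.starProjection u‖ := norm_add_le _ _
    _ ≤ C⁻¹ * ‖g‖ + ‖g‖ := add_le_add (by rwa [le_inv_mul_iff₀ hC]) hPu
    _ = (C⁻¹ + 1) * ‖g‖ := by ring

end CompressionAddProj

section GrushinProblem

variable {D T : Submodule 𝕜 F} [T.HasOrthogonalProjection] {H : D →ₗ[𝕜] F}

theorem exists_map_add_eq [CompleteSpace F] (hTD : T ≤ D) (hH : IsSelfAdjointOn H)
    (hD : Dense (D : Set F)) {C : ℝ} (hC : 0 < C) (hcoer : IsCoerciveCompression H T C)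
    {L : ℝ} (hL : ∀ t : D, (t : F) ∈ T → ‖H t‖ ≤ L * ‖(t : F)‖) (v : F) (τ : T) :
    ∃ u : D, ∃ t : T, H u + t = v ∧ T.orthogonalProjectionOnto u = τ := by
  let τD : D := inclusion hTD τ
  obtain ⟨u, hu⟩ := (hH.compressionAddProj hL).surjective hD
    (hcoer.norm_le_compressionAddProj hC) (Tᗮ.starProjection (v - H τD) + τ)
  have hPu : T.starProjection u = τ := by
    rw [← starProjection_compressionAddProj (hTD := hTD), hu, map_add,
      (starProjection_apply_eq_zero_iff T).mpr (starProjection_apply_mem _ _), zero_add,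
      starProjection_mem_subspace_eq_self]
  have hQ : Tᗮ.starProjection (v - H u) = 0 := by
    have h := congrArg Tᗮ.starProjection hu
    have hsub : u - domainProj T hTD u = u - τD := congrArg (u - ·) (Subtype.ext hPu)
    rw [orthogonal_starProjection_compressionAddProj, hsub, map_add,
      starProjection_orthogonal_apply_eq_zero τ.2, add_zero,
      starProjection_eq_self_iff.mpr (starProjection_apply_mem _ _), map_sub, map_sub, map_sub,
      sub_left_inj] at h
    rw [map_sub, h, sub_self]
  have ht : v - H u ∈ T := by
    rwa [starProjection_apply_eq_zero_iff, orthogonal_orthogonal] at hQ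
  exact ⟨u, ⟨v - H u, ht⟩, add_sub_cancel _ _, Subtype.ext hPu⟩

lemma norm_starProjection_map_le (hTD : T ≤ D) (hH : IsSelfAdjointOn H) {L : ℝ} (hL₀ : 0 ≤ L)
    (hL : ∀ t : D, (t : F) ∈ T → ‖H t‖ ≤ L * ‖(t : F)‖) (u : D) :
    ‖T.starProjection (H u)‖ ≤ L * ‖(u : F)‖ := by
  set p := T.starProjection (H u)
  have hp : ‖p‖ ^ 2 ≤ L * ‖(u : F)‖ * ‖p‖ := calc
    ‖p‖ ^ 2 = RCLike.re ⟪H u, p⟫_𝕜 := by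
      rw [← sub_add_cancel (H u) p, inner_add_left,
        starProjection_inner_eq_zero _ _ (starProjection_apply_mem _ _), zero_add,
        inner_self_eq_norm_sq]
    _ = RCLike.re ⟪(u : F), H (domainProj T hTD (H u))⟫_𝕜 := by
      rw [← hH.symm]; rfl
    _ ≤ ‖(u : F)‖ * ‖H (domainProj T hTD (H u))‖ := re_inner_le_norm _ _
    _ ≤ ‖(u : F)‖ * (L * ‖p‖) := by
      gcongr
      exact hL _ (starProjection_apply_mem _ _)
    _ = L * ‖(u : F)‖ * ‖p‖ := by ring
  nlinarith [norm_nonneg p, norm_nonneg (u : F), mul_nonneg hL₀ (norm_nonneg (u : F))]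

lemma mul_norm_orthogonal_starProjection_le (hTD : T ≤ D) {C : ℝ}
    (hcoer : IsCoerciveCompression H T C) {L : ℝ}
    (hL : ∀ t : D, (t : F) ∈ T → ‖H t‖ ≤ L * ‖(t : F)‖) {u : D} {t : T} {v : F}
    (h : H u + t = v) : C * ‖Tᗮ.starProjection u‖ ≤ ‖v‖ + L * ‖T.starProjection u‖ := by
  have hQHu : Tᗮ.starProjection (H u) = Tᗮ.starProjection v := by
    rw [← h, map_add, starProjection_orthogonal_apply_eq_zero t.2, add_zero]
  rw [← coe_sub_domainProj T hTD]
  calc _ ≤ ‖Tᗮ.starProjection (H (u - domainProj T hTD u))‖ :=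
        hcoer.mul_norm_le _ (by rw [coe_sub_domainProj]; exact starProjection_apply_mem _ _)
    _ = ‖Tᗮ.starProjection v - Tᗮ.starProjection (H (domainProj T hTD u))‖ := by
        rw [map_sub, map_sub, hQHu]
    _ ≤ ‖v‖ + ‖H (domainProj T hTD u)‖ :=
        (norm_sub_le _ _).trans (add_le_add (norm_starProjection_apply_le _ _)
          (norm_starProjection_apply_le _ _))
    _ ≤ ‖v‖ + L * ‖T.starProjection u‖ := by
        gcongr
        exact hL _ (starProjection_apply_mem _ _)

theorem norm_add_norm_le_of_map_add_eq (hTD : T ≤ D) (hH : IsSelfAdjointOn H) {C : ℝ}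
    (hC : 0 < C) (hcoer : IsCoerciveCompression H T C) {L : ℝ} (hL₀ : 0 ≤ L)
    (hL : ∀ t : D, (t : F) ∈ T → ‖H t‖ ≤ L * ‖(t : F)‖) {u : D} {t : T} {v : F}
    (h : H u + t = v) :
    ‖(u : F)‖ + ‖t‖ ≤
      (1 + (1 + L) * (C⁻¹ * (1 + L) + 1)) * (‖v‖ + ‖T.orthogonalProjectionOnto u‖) := by
  set s := ‖T.orthogonalProjectionOnto u‖
  have hu : ‖(u : F)‖ ≤ C⁻¹ * (‖v‖ + L * s) + s := calc
    ‖(u : F)‖ = ‖Tᗮ.starProjection u + T.starProjection u‖ := by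
        rw [starProjection_orthogonal_val, sub_add_cancel]
    _ ≤ ‖Tᗮ.starProjection u‖ + s := norm_add_le _ _
    _ ≤ C⁻¹ * (‖v‖ + L * s) + s := by
        gcongr
        rw [le_inv_mul_iff₀ hC]
        exact mul_norm_orthogonal_starProjection_le hTD hcoer hL h
  have ht : ‖t‖ ≤ ‖v‖ + L * ‖(u : F)‖ := calc
    ‖t‖ = ‖T.starProjection v - T.starProjection (H u)‖ := by
        rw [← map_sub, ← h, add_sub_cancel_left, starProjection_mem_subspace_eq_self]; rfl
    _ ≤ ‖v‖ + L * ‖(u : F)‖ := (norm_sub_le _ _).trans (add_le_add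
        (norm_starProjection_apply_le _ _) (norm_starProjection_map_le hTD hH hL₀ hL u))
  have hs : 0 ≤ s := norm_nonneg _
  have hCinv : 0 ≤ C⁻¹ := inv_nonneg.mpr hC.le
  have hu' : ‖(u : F)‖ ≤ (C⁻¹ * (1 + L) + 1) * (‖v‖ + s) := by
    nlinarith [norm_nonneg v, mul_nonneg hCinv (norm_nonneg v), mul_nonneg hCinv hs,
      mul_nonneg (mul_nonneg hCinv hL₀) (norm_nonneg v)]
  calc ‖(u : F)‖ + ‖t‖ ≤ ‖v‖ + (1 + L) * ‖(u : F)‖ := by linarith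
    _ ≤ ‖v‖ + (1 + L) * ((C⁻¹ * (1 + L) + 1) * (‖v‖ + s)) := by gcongr
    _ ≤ _ := by nlinarith [mul_nonneg (by positivity : 0 ≤ (1 + L) * (C⁻¹ * (1 + L) + 1)) hs]

theorem eq_of_map_add_eq (hTD : T ≤ D) (hH : IsSelfAdjointOn H) {C : ℝ} (hC : 0 < C)
    (hcoer : IsCoerciveCompression H T C) {L : ℝ} (hL₀ : 0 ≤ L)
    (hL : ∀ t : D, (t : F) ∈ T → ‖H t‖ ≤ L * ‖(t : F)‖)
    {u u' : D} {t t' : T} {v : F} (h : H u + t = v) (h' : H u' + t' = v)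
    (hP : T.orthogonalProjectionOnto u = T.orthogonalProjectionOnto u') : u = u' ∧ t = t' := by
  have hdiff : H (u - u') + ↑(t - t') = 0 := by
    rw [map_sub, Submodule.coe_sub, sub_add_sub_comm, h, h', sub_self]
  have := norm_add_norm_le_of_map_add_eq hTD hH hC hcoer hL₀ hL hdiff
  rw [Submodule.coe_sub, map_sub, hP, sub_self, norm_zero, norm_zero, add_zero, mul_zero] at this
  have hu : ‖(u : F) - u'‖ = 0 := le_antisymm (by linarith [norm_nonneg (t - t')]) (norm_nonneg _)
  have ht : ‖t - t'‖ = 0 := le_antisymm (by linarith [norm_nonneg ((u : F) - u')]) (norm_nonneg _)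
  exact ⟨Subtype.ext (sub_eq_zero.mp (norm_eq_zero.mp hu)), sub_eq_zero.mp (norm_eq_zero.mp ht)⟩

end GrushinProblem

section Orthonormal

variable {ι : Type*} [Fintype ι] {ψ : ι → F}

instance : FiniteDimensional 𝕜 (span 𝕜 (Set.range ψ)) :=
  FiniteDimensional.span_of_finite 𝕜 (Set.finite_range ψ)

noncomputable def Orthonormal.basisSpan (hψ : Orthonormal 𝕜 ψ) :
    OrthonormalBasis ι 𝕜 (span 𝕜 (Set.range ψ)) :=
  (Module.Basis.span hψ.linearIndependent).toOrthonormalBasis (by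
    rw [funext (Module.Basis.span_apply hψ.linearIndependent)]
    exact orthonormal_span hψ)

@[simp]
lemma Orthonormal.coe_basisSpan (hψ : Orthonormal 𝕜 ψ) (i : ι) : (hψ.basisSpan i : F) = ψ i := by
  simp [Orthonormal.basisSpan]

lemma Orthonormal.coe_basisSpan_repr_symm (hψ : Orthonormal 𝕜 ψ) (c : EuclideanSpace 𝕜 ι) :
    (hψ.basisSpan.repr.symm c : F) = ∑ i, c i • ψ i := by
  simp [← hψ.basisSpan.sum_repr_symm]

lemma Orthonormal.starProjection_span (hψ : Orthonormal 𝕜 ψ) (x : F) :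
    (span 𝕜 (Set.range ψ)).starProjection x = ∑ i, ⟪ψ i, x⟫_𝕜 • ψ i := by
  rw [← coe_orthogonalProjectionOnto_apply,
    OrthonormalBasis.orthogonalProjectionOnto_apply_eq_sum hψ.basisSpan]
  simp

lemma Orthonormal.forall_inner_eq_iff (hψ : Orthonormal 𝕜 ψ) (x : F) (e : EuclideanSpace 𝕜 ι) :
    (∀ i, ⟪ψ i, x⟫_𝕜 = e i) ↔
      (span 𝕜 (Set.range ψ)).orthogonalProjectionOnto x = hψ.basisSpan.repr.symm e := by
  rw [LinearIsometryEquiv.eq_symm_apply, PiLp.ext_iff]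
  simp [OrthonormalBasis.repr_apply_apply]

lemma Orthonormal.isCoerciveCompression_span {D : Submodule 𝕜 F} {H : D →ₗ[𝕜] F}
    (hψ : Orthonormal 𝕜 ψ) {C : ℝ}
    (hcoer : ∀ u : D, (∀ i, ⟪ψ i, (u : F)⟫_𝕜 = 0) →
      C * ‖(u : F)‖ ^ 2 ≤ RCLike.re ⟪H u - ∑ i, ⟪ψ i, H u⟫_𝕜 • ψ i, (u : F)⟫_𝕜) :
    IsCoerciveCompression H (span 𝕜 (Set.range ψ)) C := fun u hu => by
  rw [starProjection_orthogonal_val, hψ.starProjection_span]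
  exact hcoer u fun i => inner_right_of_mem_orthogonal (subset_span (Set.mem_range_self i)) hu

lemma Orthonormal.norm_map_le_of_mem_span {D : Submodule 𝕜 F} {H : D →ₗ[𝕜] F}
    (hψ : Orthonormal 𝕜 ψ) (hψD : ∀ i, ψ i ∈ D) {M : ℝ}
    (hM : ∀ i, ‖H ⟨ψ i, hψD i⟩‖ ≤ M) (t : D) (ht : (t : F) ∈ span 𝕜 (Set.range ψ)) :
    ‖H t‖ ≤ Fintype.card ι * M * ‖(t : F)‖ := by
  have hsum : t = ∑ i, ⟪ψ i, (t : F)⟫_𝕜 • (⟨ψ i, hψD i⟩ : D) := Subtype.ext <| by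
    simp only [coe_sum, coe_smul]
    rw [← hψ.starProjection_span, starProjection_eq_self_iff.mpr ht]
  calc ‖H t‖ = ‖∑ i, ⟪ψ i, (t : F)⟫_𝕜 • H ⟨ψ i, hψD i⟩‖ := by
        conv_lhs => rw [hsum]
        simp only [map_sum, map_smul]
    _ ≤ ∑ _i : ι, ‖(t : F)‖ * M := by
        refine norm_sum_le_of_le _ fun i _ => ?_
        rw [norm_smul]
        gcongr
        · simpa [hψ.1 i] using norm_inner_le_norm (𝕜 := 𝕜) (ψ i) (t : F)
        · exact hM i
    _ = Fintype.card ι * M * ‖(t : F)‖ := by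
        rw [Finset.sum_const, Finset.card_univ, nsmul_eq_mul]
        ring

end Orthonormal

/-- **Well-posedness of the Grushin problem (Lemma 3.6).** Let `H` be a self-adjoint operator in
a Hilbert space `F` with dense domain `D`, `ψ 0, …, ψ (N−1) ∈ D` an orthonormal system spanning
`T`, with projection `Π x = ∑ j (ψ j, x) ψ j`, and `R₊ u := ((u, ψ j))_j`,
`R₋ c := ∑ j c j • ψ j`. Assume the coercivity `((1−Π) H u, u) ≥ C ‖u‖²` for `u ∈ D ∩ Tᗮ`,
`C > 0`, and `‖H ψ j‖ ≤ M`. Then the block operator `Q (u, c) = (H u + R₋ c, R₊ u)` is a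
bijection from `D ⊕ ℂ^N` onto `F ⊕ ℂ^N`, and its inverse is bounded by a constant `C'`
depending only on `C`, `N` and `M`. -/
theorem stmt_6 (N : ℕ) (C M : ℝ) (hC : 0 < C) (hM : 0 ≤ M) :
    ∃ C' : ℝ, 0 < C' ∧
      ∀ (F : Type) (_ : NormedAddCommGroup F) (_ : InnerProductSpace ℂ F) (_ : CompleteSpace F)
        (D : Submodule ℂ F) (_ : Dense (D : Set F)) (H : D →ₗ[ℂ] F)
        (_ : ∀ u v : D, (inner ℂ (H u) (v : F) : ℂ) = inner ℂ (u : F) (H v))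
        (_ : ∀ v f : F, (∀ u : D, (inner ℂ (H u) v : ℂ) = inner ℂ (u : F) f) → v ∈ D)
        (ψ : Fin N → F) (hψD : ∀ j, ψ j ∈ D) (_ : Orthonormal ℂ ψ)
        (_ : ∀ j, ‖H ⟨ψ j, hψD j⟩‖ ≤ M)
        (_ : ∀ u : D, (∀ j, (inner ℂ (ψ j) (u : F) : ℂ) = 0) →
          C * ‖(u : F)‖ ^ 2 ≤
            (inner ℂ (H u - ∑ j, (inner ℂ (ψ j) (H u) : ℂ) • ψ j) (u : F) : ℂ).re),
        ∀ (v : F) (e : EuclideanSpace ℂ (Fin N)),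
          (∃! p : F × EuclideanSpace ℂ (Fin N), ∃ hp : p.1 ∈ D,
              H ⟨p.1, hp⟩ + ∑ j, p.2 j • ψ j = v ∧
                ∀ j, (inner ℂ (ψ j) p.1 : ℂ) = e j) ∧
          ∀ (u : F) (c : EuclideanSpace ℂ (Fin N)) (hu : u ∈ D),
            H ⟨u, hu⟩ + ∑ j, c j • ψ j = v → (∀ j, (inner ℂ (ψ j) u : ℂ) = e j) →
              ‖u‖ + ‖c‖ ≤ C' * (‖v‖ + ‖e‖) := by
  refine ⟨1 + (1 + N * M) * (C⁻¹ * (1 + N * M) + 1), by positivity, ?_⟩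
  intro F _ _ _ D hD H hsym hsa ψ hψD hψ hMψ hcoer v e
  have hTD : span ℂ (Set.range ψ) ≤ D := span_le.mpr (Set.range_subset_iff.mpr hψD)
  have hH : IsSelfAdjointOn H := ⟨hsym, hsa⟩
  have hcoerT := hψ.isCoerciveCompression_span hcoer
  have hL : ∀ t : D, (t : F) ∈ span ℂ (Set.range ψ) → ‖H t‖ ≤ (N * M) * ‖(t : F)‖ := by
    simpa using hψ.norm_map_le_of_mem_span hψD hMψ
  set R := hψ.basisSpan.repr
  have hsum (c : EuclideanSpace ℂ (Fin N)) : ∑ j, c j • ψ j = (R.symm c : F) :=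
    (hψ.coe_basisSpan_repr_symm c).symm
  have hbound (u : F) (c : EuclideanSpace ℂ (Fin N)) (hu : u ∈ D)
      (h₁ : H ⟨u, hu⟩ + ∑ j, c j • ψ j = v) (h₂ : ∀ j, ⟪ψ j, u⟫_ℂ = e j) :
      ‖u‖ + ‖c‖ ≤ (1 + (1 + N * M) * (C⁻¹ * (1 + N * M) + 1)) * (‖v‖ + ‖e‖) := by
    rw [hsum] at h₁
    have := norm_add_norm_le_of_map_add_eq hTD hH hC hcoerT (by positivity) hL h₁
    rwa [(hψ.forall_inner_eq_iff u e).mp h₂, LinearIsometryEquiv.norm_map,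
      LinearIsometryEquiv.norm_map] at this
  refine ⟨?_, hbound⟩
  obtain ⟨u, t, h₁, h₂⟩ := exists_map_add_eq hTD hH hD hC hcoerT hL v (R.symm e)
  refine ⟨((u : F), R t), ?_, ?_⟩
  · refine ⟨u.2, by rwa [hsum, LinearIsometryEquiv.symm_apply_apply], ?_⟩
    exact (hψ.forall_inner_eq_iff u e).mpr h₂
  rintro ⟨u', c'⟩ ⟨hu', h₁', h₂'⟩
  rw [hsum] at h₁'
  obtain ⟨rfl, rfl⟩ := eq_of_map_add_eq hTD hH hC hcoerT (by positivity) hL h₁' h₁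
    (((hψ.forall_inner_eq_iff u' e).mp h₂').trans h₂.symm)
  simp
end

section
/- Let A : ℝ^d → ℝ^d be a linear map (vector potential of a constant magnetic field), ω_A(x,y) := exp(−i ∫_{[x,y]} A) = exp(i⟨x−y, ∫₀¹ A((1−s)x+sy) ds⟩) the magnetic phase, and for a ∈ ℝ^d define the magnetic translation T_a := σ_{A(a)} τ_a where (σ_v u)(x) = e^{i⟨v,x⟩}u(x) and (τ_a u)(x) = u(x−a). Then for all x, y, a ∈ ℝ^d we have ω_A(x−a, y−a) = ω_A(x,y) · e^{i⟨A(a), y−x⟩}; consequently, for any symbol q independent of x, the magnetic Weyl operator Op^A(q) u(x) := (2π)^{−d} ∬ e^{i⟨η,x−y⟩} ω_A(x,y) q(η) u(y) dy dη commutes with every magnetic translation T_a on S(ℝ^d). -/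
/-!
Since `A` is linear, the integral of `A` along the segment from `x - a` to `y - a` is the one
along `[x, y]` minus `A a`, which gives the phase identity. In `Op^A(q) (T_a u) (x)` substitute
`y ↦ y + a` in the inner integral: the phase identity turns `ω_A(x, y + a) e^{i⟨A a, y + a⟩}`
into `ω_A(x - a, y) e^{i⟨A a, x⟩}`, and since the symbol does not depend on the position
variable, what remains is `T_a (Op^A(q) u) (x)`.
-/

open MeasureTheory intervalIntegral

noncomputable section

/-- The magnetic phase `ω_A(x,y) = exp(−i ∫_{[x,y]} A) = exp(i⟨x−y, ∫₀¹ A((1−s)x+sy) ds⟩)`. -/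
def magPhase {d : ℕ} (A : EuclideanSpace ℝ (Fin d) →ₗ[ℝ] EuclideanSpace ℝ (Fin d))
    (x y : EuclideanSpace ℝ (Fin d)) : ℂ :=
  Complex.exp (Complex.I *
    (((inner ℝ (x - y) (∫ s in (0:ℝ)..(1:ℝ), A ((1 - s) • x + s • y)) : ℝ)) : ℂ))

/-- The magnetic Weyl quantization `Op^A(q) u (x) = (2π)^{−d} ∬ e^{i⟨η,x−y⟩} ω_A(x,y) q(η) u(y)`
of a symbol `q` independent of `x`. -/
def magOp {d : ℕ} (A : EuclideanSpace ℝ (Fin d) →ₗ[ℝ] EuclideanSpace ℝ (Fin d))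
    (q : EuclideanSpace ℝ (Fin d) → ℂ) (u : EuclideanSpace ℝ (Fin d) → ℂ)
    (x : EuclideanSpace ℝ (Fin d)) : ℂ :=
  (((2 * Real.pi) ^ d : ℝ) : ℂ)⁻¹ *
    ∫ η : EuclideanSpace ℝ (Fin d), ∫ y : EuclideanSpace ℝ (Fin d),
      Complex.exp (Complex.I * ((inner ℝ η (x - y) : ℝ) : ℂ)) * magPhase A x y * q η * u y

/-- The magnetic translation `T_a = σ_{A a} τ_a`. -/
def magTranslate {d : ℕ} (A : EuclideanSpace ℝ (Fin d) →ₗ[ℝ] EuclideanSpace ℝ (Fin d))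
    (a : EuclideanSpace ℝ (Fin d)) (u : EuclideanSpace ℝ (Fin d) → ℂ)
    (z : EuclideanSpace ℝ (Fin d)) : ℂ :=
  Complex.exp (Complex.I * ((inner ℝ (A a) z : ℝ) : ℂ)) * u (z - a)

lemma intervalIntegral_linearMap_segment_sub {E F : Type*}
    [NormedAddCommGroup E] [NormedSpace ℝ E] [FiniteDimensional ℝ E]
    [NormedAddCommGroup F] [NormedSpace ℝ F] [CompleteSpace F]
    (A : E →ₗ[ℝ] F) (x y a : E) :
    ∫ s in (0:ℝ)..1, A ((1 - s) • (x - a) + s • (y - a)) =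
      (∫ s in (0:ℝ)..1, A ((1 - s) • x + s • y)) - A a := by
  have hint : IntervalIntegrable (fun s : ℝ => A ((1 - s) • x + s • y)) volume 0 1 :=
    (A.continuous_of_finiteDimensional.comp (by fun_prop)).intervalIntegrable 0 1
  have hshift (s : ℝ) : (1 - s) • (x - a) + s • (y - a) = ((1 - s) • x + s • y) - a := by
    module
  simp only [hshift, map_sub]
  rw [integral_sub hint intervalIntegrable_const, intervalIntegral.integral_const, sub_zero,
    one_smul]

lemma magPhase_sub_sub {d : ℕ} (A : EuclideanSpace ℝ (Fin d) →ₗ[ℝ] EuclideanSpace ℝ (Fin d))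
    (x y a : EuclideanSpace ℝ (Fin d)) :
    magPhase A (x - a) (y - a) =
      magPhase A x y * Complex.exp (Complex.I * ((inner ℝ (A a) (y - x) : ℝ) : ℂ)) := by
  have hinner : (inner ℝ (A a) (y - x) : ℝ) = - inner ℝ (x - y) (A a) := by
    rw [real_inner_comm, ← neg_sub x y, inner_neg_left]
  rw [magPhase, magPhase, sub_sub_sub_cancel_right, intervalIntegral_linearMap_segment_sub,
    ← Complex.exp_add, inner_sub_right, hinner]
  push_cast
  ring_nf

lemma magPhase_add_mul_exp_inner {d : ℕ}
    (A : EuclideanSpace ℝ (Fin d) →ₗ[ℝ] EuclideanSpace ℝ (Fin d))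
    (x y a : EuclideanSpace ℝ (Fin d)) :
    magPhase A x (y + a) * Complex.exp (Complex.I * ((inner ℝ (A a) (y + a) : ℝ) : ℂ)) =
      magPhase A (x - a) y * Complex.exp (Complex.I * ((inner ℝ (A a) x : ℝ) : ℂ)) := by
  rw [← add_sub_cancel_right y a, magPhase_sub_sub, add_sub_cancel_right, mul_assoc,
    ← Complex.exp_add, inner_sub_right]
  push_cast
  ring_nf

theorem magOp_magTranslate {d : ℕ}
    (A : EuclideanSpace ℝ (Fin d) →ₗ[ℝ] EuclideanSpace ℝ (Fin d))
    (q u : EuclideanSpace ℝ (Fin d) → ℂ) (a : EuclideanSpace ℝ (Fin d)) :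
    magOp A q (magTranslate A a u) = magTranslate A a (magOp A q u) := by
  funext x
  have hkernel (η : EuclideanSpace ℝ (Fin d)) :
      (∫ y, Complex.exp (Complex.I * ((inner ℝ η (x - y) : ℝ) : ℂ)) * magPhase A x y * q η *
          magTranslate A a u y) =
        Complex.exp (Complex.I * ((inner ℝ (A a) x : ℝ) : ℂ)) *
          ∫ y, Complex.exp (Complex.I * ((inner ℝ η (x - a - y) : ℝ) : ℂ)) *
            magPhase A (x - a) y * q η * u y := by
    rw [← integral_add_right_eq_self _ a, ← MeasureTheory.integral_const_mul]
    congr 1 with y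
    have hphase := magPhase_add_mul_exp_inner A x y a
    simp only [magTranslate, add_sub_cancel_right, sub_add_eq_sub_sub_swap]
    linear_combination
      (Complex.exp (Complex.I * ((inner ℝ η (x - a - y) : ℝ) : ℂ)) * q η * u y) * hphase
  simp only [magOp, hkernel, MeasureTheory.integral_const_mul]
  rw [magTranslate, magOp]
  ring

/-- **Magnetic translations commute with the magnetic Weyl calculus for a constant field
(Lemma 8.1).** Let `A` be a linear vector potential (of a constant magnetic field). Then the
magnetic phase satisfies `ω_A(x−a, y−a) = ω_A(x,y) e^{i⟨A a, y−x⟩}`, and consequently, for any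
(integrable) symbol `q` independent of `x`, the magnetic Weyl operator `Op^A(q)` commutes with
every magnetic translation `T_a = σ_{A(a)} τ_a`, `(T_a u)(x) = e^{i⟨A a, x⟩} u(x−a)`, on
Schwartz functions. -/
theorem stmt_16 (d : ℕ)
    (A : EuclideanSpace ℝ (Fin d) →ₗ[ℝ] EuclideanSpace ℝ (Fin d)) :
    (∀ x y a : EuclideanSpace ℝ (Fin d),
      magPhase A (x - a) (y - a) =
        magPhase A x y * Complex.exp (Complex.I * ((inner ℝ (A a) (y - x) : ℝ) : ℂ))) ∧
    ∀ (q : EuclideanSpace ℝ (Fin d) → ℂ), Integrable q →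
      ∀ (u : SchwartzMap (EuclideanSpace ℝ (Fin d)) ℂ) (a x : EuclideanSpace ℝ (Fin d)),
        magOp A q
            (fun z => Complex.exp (Complex.I * ((inner ℝ (A a) z : ℝ) : ℂ)) * u (z - a)) x =
          Complex.exp (Complex.I * ((inner ℝ (A a) x : ℝ) : ℂ)) *
            magOp A q (fun z => u z) (x - a) :=
  ⟨magPhase_sub_sub A, fun q _ u a x => congrFun (magOp_magTranslate A q u a) x⟩

end
end
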